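/- Let h : {0,1}^{2n} → {0,1} with p ∈ (λ, 1−λ), λ ∈ (0,1/2). Let A = h^{-1}(1), let Odd be the set of points with an odd number of ones, and let i be a coordinate with Inf_i^{(p)}(h) ≤ τ. Then μ_p(A ∩ Even) ≥ (λ/(1−λ)) · (μ_p(A ∩ Odd) − τ/(λ(1−λ))), where Even is the complement of Odd. -/
import Mathlib


open Finset

noncomputable def w (p : ℝ) (b : Bool) : ℝ := if b then p else 1 - p

noncomputable def mu (p : ℝ) {n : ℕ} (x : Fin n → Bool) : ℝ := ∏ i, w p (x i)

def bflip {n : ℕ} (x : Fin n → Bool) (i : Fin n) : Fin n → Bool :=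
  Function.update x i (!(x i))

lemma bflip_bflip {n : ℕ} (x : Fin n → Bool) (i : Fin n) : bflip (bflip x i) i = x := by
  funext j
  by_cases hj : j = i <;> simp [bflip, Function.update, hj]

lemma bflip_inj {n : ℕ} (i : Fin n) : Function.Injective (fun x : Fin n → Bool => bflip x i) := by
  intro a b hab
  have := congrArg (fun y => bflip y i) hab
  simpa [bflip_bflip] using this

lemma bflip_filter {n : ℕ} (x : Fin n → Bool) (i : Fin n) :
    Finset.univ.filter (fun j => bflip x i j = true) =
    if x i then (Finset.univ.filter (fun j => x j = true)).erase i
    else insert i (Finset.univ.filter (fun j => x j = true)) := by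
  by_cases hx : x i <;> ext j <;> by_cases hj : j = i <;>
    simp [bflip, Function.update, hj, hx]

lemma mu_nonneg {n : ℕ} {p : ℝ} (hp0 : 0 ≤ p) (hp1 : p ≤ 1) (x : Fin n → Bool) :
    0 ≤ mu p x := by
  apply Finset.prod_nonneg
  intro j _
  unfold w
  split <;> linarith

lemma mu_bflip_ge {n : ℕ} {lam p : ℝ} (hlam : 0 < lam) (hlam2 : lam < 1/2)
    (hp1 : lam < p) (hp2 : p < 1 - lam) (x : Fin n → Bool) (i : Fin n) :
    mu p (bflip x i) ≥ (lam / (1 - lam)) * mu p x := by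
  have h1 : (0:ℝ) < 1 - lam := by linarith
  have hp0 : 0 < p := by linarith
  have hp1' : p < 1 := by linarith
  unfold mu
  rw [← Finset.prod_erase_mul _ _ (Finset.mem_univ i),
      ← Finset.prod_erase_mul _ _ (Finset.mem_univ i)]
  have hprod : ∏ j ∈ Finset.univ.erase i, w p (bflip x i j)
      = ∏ j ∈ Finset.univ.erase i, w p (x j) := by
    apply Finset.prod_congr rfl
    intro j hj
    have : j ≠ i := (Finset.mem_erase.1 hj).1
    simp [bflip, Function.update, this]
  rw [hprod]
  have hpn : 0 ≤ ∏ j ∈ Finset.univ.erase i, w p (x j) := by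
    apply Finset.prod_nonneg; intro j _; unfold w; split <;> linarith
  have hkey : w p (bflip x i i) ≥ (lam / (1 - lam)) * w p (x i) := by
    have : bflip x i i = !(x i) := by simp [bflip]
    rw [this]
    cases hxi : x i <;> simp [w] <;>
      rw [div_mul_eq_mul_div, div_le_iff₀ h1] <;> nlinarith
  calc (lam / (1 - lam)) * ((∏ j ∈ Finset.univ.erase i, w p (x j)) * w p (x i))
      = (∏ j ∈ Finset.univ.erase i, w p (x j)) * ((lam / (1 - lam)) * w p (x i)) := by ring
    _ ≤ (∏ j ∈ Finset.univ.erase i, w p (x j)) * w p (bflip x i i) := by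
        apply mul_le_mul_of_nonneg_left hkey hpn

noncomputable def pinf (p : ℝ) {n : ℕ} (h : (Fin n → Bool) → Bool) (i : Fin n) : ℝ :=
  p * (1 - p) * ∑ x : Fin n → Bool, if h x ≠ h (bflip x i) then mu p x else 0

noncomputable def muSet (p : ℝ) {n : ℕ} (A : Finset (Fin n → Bool)) : ℝ :=
  ∑ x ∈ A, mu p x

/-- points with an odd number of ones -/
def OddSet (n : ℕ) : Finset (Fin n → Bool) :=
  Finset.univ.filter (fun x => (Finset.univ.filter (fun i => x i = true)).card % 2 = 1)

/-- points with an even number of ones -/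
def EvenSet (n : ℕ) : Finset (Fin n → Bool) :=
  Finset.univ.filter (fun x => (Finset.univ.filter (fun i => x i = true)).card % 2 = 0)

lemma bflip_mem_even {n : ℕ} {x : Fin n → Bool} (i : Fin n) (hx : x ∈ OddSet n) :
    bflip x i ∈ EvenSet n := by
  simp only [OddSet, EvenSet, Finset.mem_filter, Finset.mem_univ, true_and] at hx ⊢
  rw [bflip_filter]
  by_cases hxi : x i
  · have hmem : i ∈ Finset.univ.filter (fun j => x j = true) := by
      simp [hxi]
    rw [if_pos hxi, Finset.card_erase_of_mem hmem]
    have : 1 ≤ (Finset.univ.filter (fun j => x j = true)).card :=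
      Finset.card_pos.2 ⟨i, hmem⟩
    omega
  · have hmem : i ∉ Finset.univ.filter (fun j => x j = true) := by
      simp [hxi]
    rw [if_neg hxi, Finset.card_insert_of_notMem hmem]
    omega

/-- Let `h : {0,1}^{2n} → {0,1}`, `λ ∈ (0,1/2)`, `p ∈ (λ,1−λ)`, `A = h^{-1}(1)`, and let
`i` be a coordinate with `Inf_i^{(p)}(h) ≤ τ`. Then
`μ_p(A ∩ Even) ≥ (λ/(1−λ))·(μ_p(A ∩ Odd) − τ/(λ(1−λ)))`. -/
theorem even_part_large {n : ℕ} {lam p τ : ℝ} (hlam : lam ∈ Set.Ioo (0:ℝ) (1/2))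
    (hp : p ∈ Set.Ioo lam (1 - lam))
    (h : (Fin (2*n) → Bool) → Bool) (i : Fin (2*n)) (hi : pinf p h i ≤ τ) :
    muSet p ((Finset.univ.filter (fun x => h x = true)) ∩ EvenSet (2*n)) ≥
      (lam / (1 - lam)) *
        (muSet p ((Finset.univ.filter (fun x => h x = true)) ∩ OddSet (2*n)) -
          τ / (lam * (1 - lam))) := by
  obtain ⟨hl0, hl2⟩ := hlam
  obtain ⟨hpl, hpu⟩ := hp
  have hp0 : 0 < p := lt_trans hl0 hpl
  have hp1 : p < 1 := by linarith
  have h1l : (0:ℝ) < 1 - lam := by linarith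
  set A : Finset (Fin (2*n) → Bool) := Finset.univ.filter (fun x => h x = true) with hA
  set AO := A ∩ OddSet (2*n) with hAO
  set S := AO.filter (fun x => h (bflip x i) = true) with hS
  set T := AO.filter (fun x => ¬ h (bflip x i) = true) with hT
  have hmu0 : ∀ x : Fin (2*n) → Bool, 0 ≤ mu p x :=
    fun x => mu_nonneg (le_of_lt hp0) (le_of_lt hp1) x
  -- split the odd part
  have hsplit : muSet p AO = (∑ x ∈ S, mu p x) + (∑ x ∈ T, mu p x) := by
    rw [hS, hT, muSet, Finset.sum_filter_add_sum_filter_not]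
  -- pivotal bound
  have hTsub : (∑ x ∈ T, mu p x) ≤ τ / (p * (1 - p)) := by
    have hsum : (∑ x ∈ T, mu p x)
        ≤ ∑ x : Fin (2*n) → Bool, if h x ≠ h (bflip x i) then mu p x else 0 := by
      have : (∑ x ∈ T, mu p x)
          = ∑ x ∈ T, (if h x ≠ h (bflip x i) then mu p x else 0) := by
        apply Finset.sum_congr rfl
        intro x hx
        rw [hT, Finset.mem_filter] at hx
        have hx1 : h x = true := by
          have := hx.1
          rw [hAO, Finset.mem_inter, hA, Finset.mem_filter] at this
          exact this.1.2
        have hx2 : ¬ h (bflip x i) = true := hx.2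
        rw [if_pos]
        rw [hx1]
        exact fun hc => hx2 hc.symm
      rw [this]
      apply Finset.sum_le_sum_of_subset_of_nonneg (Finset.subset_univ T)
      intro x _ _
      split
      · exact hmu0 x
      · exact le_refl 0
    have hpp : 0 < p * (1 - p) := mul_pos hp0 (by linarith)
    rw [le_div_iff₀ hpp]
    calc (∑ x ∈ T, mu p x) * (p * (1 - p))
        ≤ (∑ x : Fin (2*n) → Bool, if h x ≠ h (bflip x i) then mu p x else 0) * (p * (1-p)) := by
          apply mul_le_mul_of_nonneg_right hsum (le_of_lt hpp)
      _ = pinf p h i := by rw [pinf]; ring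
      _ ≤ τ := hi
  -- image bound
  have himg : muSet p (A ∩ EvenSet (2*n)) ≥ ∑ x ∈ S, mu p (bflip x i) := by
    have hinj : Set.InjOn (fun x => bflip x i) S := fun a _ b _ hab => bflip_inj i hab
    rw [← Finset.sum_image (fun a ha b hb hab => hinj ha hb hab)]
    apply Finset.sum_le_sum_of_subset_of_nonneg
    · intro y hy
      rw [Finset.mem_image] at hy
      obtain ⟨x, hx, rfl⟩ := hy
      rw [hS, Finset.mem_filter] at hx
      obtain ⟨hxAO, hxb⟩ := hx
      rw [hAO, Finset.mem_inter] at hxAO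
      rw [Finset.mem_inter]
      constructor
      · rw [hA, Finset.mem_filter]; exact ⟨Finset.mem_univ _, hxb⟩
      · exact bflip_mem_even i hxAO.2
    · intro x _ _; exact hmu0 x
  have hSbound : (∑ x ∈ S, mu p (bflip x i)) ≥ (lam / (1 - lam)) * ∑ x ∈ S, mu p x := by
    rw [Finset.mul_sum]
    apply Finset.sum_le_sum
    intro x _
    exact mu_bflip_ge hl0 hl2 hpl hpu x i
  -- τ nonneg and p(1-p) ≥ lam(1-lam)
  have hτ0 : 0 ≤ τ := by
    refine le_trans ?_ hi
    rw [pinf]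
    apply mul_nonneg (mul_nonneg (le_of_lt hp0) (by linarith))
    apply Finset.sum_nonneg
    intro x _
    split
    · exact hmu0 x
    · exact le_refl 0
  have hpplam : lam * (1 - lam) ≤ p * (1 - p) := by nlinarith
  have hll : 0 < lam * (1 - lam) := mul_pos hl0 h1l
  have hdiv : τ / (p * (1 - p)) ≤ τ / (lam * (1 - lam)) := by
    gcongr
  have hc0 : 0 ≤ lam / (1 - lam) := div_nonneg (le_of_lt hl0) (le_of_lt h1l)
  have key : muSet p (A ∩ EvenSet (2*n)) ≥ (lam / (1 - lam)) * ((∑ x ∈ S, mu p x)) :=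
    le_trans hSbound himg
  have : (∑ x ∈ S, mu p x) ≥ muSet p AO - τ / (lam * (1 - lam)) := by
    have : (∑ x ∈ S, mu p x) = muSet p AO - (∑ x ∈ T, mu p x) := by linarith [hsplit]
    rw [this]
    have := le_trans hTsub hdiv
    linarith
  calc (lam / (1 - lam)) * (muSet p AO - τ / (lam * (1 - lam)))
      ≤ (lam / (1 - lam)) * (∑ x ∈ S, mu p x) := mul_le_mul_of_nonneg_left this hc0
    _ ≤ muSet p (A ∩ EvenSet (2*n)) := key
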